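/- If V^{φ₁}_{α₁,β₁,ψ₁} ≅ V^{φ₂}_{α₂,β₂,ψ₂} as Vir_B-modules, then ψ₁ = ψ₂. -/

import Mathlib

open Finsupp TensorProduct

noncomputable section

/-- Loop-Virasoro carrier: `Vir ⊗ B ≅ (⊕_{n∈ℤ} d_n ⊗ B) ⊕ (C ⊗ B)`. -/
abbrev LVir (B : Type*) [AddCommMonoid B] : Type _ := (ℤ →₀ B) × B

variable (B : Type*) [CommRing B] [Algebra ℂ B]

/-- `[d_m ⊗ a, d_n ⊗ b] = (n-m) d_{m+n} ⊗ ab + δ_{m,-n} ((m³-m)/12) C ⊗ ab`. -/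
def ldBracket (m n : ℤ) (a b : B) : LVir B :=
  (Finsupp.single (m + n) ((((n : ℂ) - (m : ℂ))) • (a * b)),
    (if m = -n then ((m : ℂ) ^ 3 - (m : ℂ)) / 12 else 0) • (a * b))

/-- The bracket of the loop-Virasoro algebra `Vir_B = Vir ⊗ B`; `C ⊗ B` is central. -/
def lvirBracket (x y : LVir B) : LVir B :=
  x.1.sum fun m a => y.1.sum fun n b => ldBracket B m n a b

/-- Action of `d_n` on `V_{α,β}` -/
def dAct (α β : ℂ) (n : ℤ) : Module.End ℂ (ℤ →₀ ℂ) :=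
  Finsupp.lsum ℂ fun k => (α + (k : ℂ) + (n : ℂ) * β) • Finsupp.lsingle (k + n)

/-- Action of `Vir_B` on `V_{α,β,ψ}`:  `(d_n ⊗ b) · v_k = ψ(b)(α + k + nβ) v_{k+n}`,
`(C ⊗ b) · v_k = 0`. -/
def lAction (α β : ℂ) (ψ : B →ₐ[ℂ] ℂ) : LVir B →ₗ[ℂ] Module.End ℂ (ℤ →₀ ℂ) :=
  (Finsupp.lsum ℂ fun n =>
      (LinearMap.toSpanSingleton ℂ (Module.End ℂ (ℤ →₀ ℂ)) (dAct α β n)).comp ψ.toLinearMap).comp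
    (LinearMap.fst ℂ (ℤ →₀ B) B)

def ActInvariant {L V : Type*} [AddCommGroup V] [Module ℂ V]
    (act : L → Module.End ℂ V) (U : Submodule ℂ V) : Prop :=
  ∀ x : L, ∀ v ∈ U, act x v ∈ U

def ActIrreducible {L V : Type*} [AddCommGroup V] [Module ℂ V]
    (act : L → Module.End ℂ V) : Prop :=
  ∀ U : Submodule ℂ V, ActInvariant act U → U = ⊥ ∨ U = ⊤

def ActGenerates {L V : Type*} [AddCommGroup V] [Module ℂ V]
    (act : L → Module.End ℂ V) (S : Set V) : Prop :=
  ∀ U : Submodule ℂ V, ActInvariant act U → S ⊆ U → U = ⊤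

/-- Data of the irreducible highest weight `Vir_B`-module `V(φ)` attached to a one-dimensional
representation `φ` of `Vir⁰_B` (given by its values `φd b = φ(d_0 ⊗ b)`, `φC b = φ(C ⊗ b)`),
with highest weight vector `hv = v_φ`. -/
structure HWRep (B : Type*) [CommRing B] [Algebra ℂ B]
    (W : Type*) [AddCommGroup W] [Module ℂ W] where
  ρ : LVir B →ₗ[ℂ] Module.End ℂ W
  rep : ∀ x y : LVir B, ρ (lvirBracket B x y) = ρ x * ρ y - ρ y * ρ x
  hv : W
  hv_ne : hv ≠ 0
  φd : B →ₗ[ℂ] ℂ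
  φC : B →ₗ[ℂ] ℂ
  hw : ∀ n : ℤ, 0 < n → ∀ b : B, ρ (Finsupp.single n b, 0) hv = 0
  wt0 : ∀ b : B, ρ (Finsupp.single 0 b, 0) hv = φd b • hv
  cen : ∀ b : B, ρ (0, b) hv = φC b • hv
  gen : ActGenerates (fun x => ρ x) {hv}
  irr : ActIrreducible (fun x => ρ x)

/-- The tensor product module `V^φ_{α,β,ψ} = V(φ) ⊗ V'_{α,β,ψ}`. -/
def tensAct {W : Type*} [AddCommGroup W] [Module ℂ W] (D : HWRep B W)
    (α β : ℂ) (ψ : B →ₐ[ℂ] ℂ) (x : LVir B) : Module.End ℂ (W ⊗[ℂ] (ℤ →₀ ℂ)) :=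
  TensorProduct.map (D.ρ x) LinearMap.id + TensorProduct.map LinearMap.id (lAction B α β ψ x)

/-! If `ψ₁ ≠ ψ₂`, pick `b` with `ψ₂ b = 0 ≠ ψ₁ b`. For `n > 0` the elements `d_n ⊗ b` kill
`v_{φ₂} ⊗ v₀` in the second module, hence kill its preimage `u` under the isomorphism; in the
first module they act as `ρ₁(d_n ⊗ b) ⊗ 1 + ψ₁(b) (1 ⊗ d_n)`. In the coefficient of `v_{K+n}`,
where `K` is the top degree of `u`, only `ψ₁(b) (α₁ + K + nβ₁) u_K` survives, so
`α₁ + K + nβ₁ = 0` for all `n > 0`. Thus `β₁ = 0` and `α₁ = -K`, which the normalisation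
`0 ≤ Re α₁ < 1` forces to be `0`; but `V'_{0,0,ψ₁}` is reducible, as every `d_n` kills `v₀`. -/

theorem AlgHom.exists_apply_eq_zero_ne_zero_of_ne {k A : Type*} [Field k] [Ring A] [Algebra k A]
    {φ ψ : A →ₐ[k] k} (h : φ ≠ ψ) : ∃ a, ψ a = 0 ∧ φ a ≠ 0 := by
  obtain ⟨b, hb⟩ := DFunLike.ne_iff.mp h
  refine ⟨b - algebraMap k A (ψ b), by simp, ?_⟩
  simpa [sub_eq_zero] using hb

lemma dAct_apply (α β : ℂ) (n : ℤ) (v : ℤ →₀ ℂ) (k : ℤ) :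
    dAct α β n v k = (α + ((k - n : ℤ) : ℂ) + n * β) * v (k - n) := by
  induction v using Finsupp.induction_linear with
  | zero => simp
  | add f g hf hg => simp only [map_add, Finsupp.add_apply, hf, hg]; ring
  | single j a =>
    simp only [dAct, Finsupp.lsum_single, LinearMap.smul_apply, Finsupp.lsingle_apply,
      Finsupp.smul_single, smul_eq_mul, Finsupp.single_apply]
    by_cases h : j = k - n
    · subst h
      simp
    · rw [if_neg (by omega), if_neg h, mul_zero]

lemma lAction_single (α β : ℂ) (ψ : B →ₐ[ℂ] ℂ) (n : ℤ) (b : B) :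
    lAction B α β ψ (Finsupp.single n b, 0) = ψ b • dAct α β n := by
  simp [lAction]

lemma lAction_zero_zero_apply_single_zero (ψ : B →ₐ[ℂ] ℂ) (x : LVir B) :
    lAction B 0 0 ψ x (Finsupp.single 0 1) = 0 := by
  have hd : ∀ n, dAct 0 0 n (Finsupp.single 0 1) = 0 := fun n => by
    ext k
    rw [dAct_apply, Finsupp.single_apply]
    split_ifs with h
    · simp [← h]
    · simp
  simp [lAction, Finsupp.sum, hd]

lemma not_actIrreducible_lAction_zero_zero (ψ : B →ₐ[ℂ] ℂ) :
    ¬ ActIrreducible (fun x : LVir B => lAction B 0 0 ψ x) := by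
  intro hirr
  have hinv : ActInvariant (fun x : LVir B => lAction B 0 0 ψ x)
      (Submodule.span ℂ {Finsupp.single 0 1}) := by
    intro x v hv
    obtain ⟨t, rfl⟩ := Submodule.mem_span_singleton.mp hv
    rw [map_smul, lAction_zero_zero_apply_single_zero, smul_zero]
    exact zero_mem _
  rcases hirr _ hinv with h | h
  · have := Submodule.mem_span_singleton_self (R := ℂ) (Finsupp.single (0 : ℤ) (1 : ℂ))
    simp [h] at this
  · obtain ⟨t, ht⟩ := Submodule.mem_span_singleton.mp (h ▸ Submodule.mem_top :
      Finsupp.single (1 : ℤ) (1 : ℂ) ∈ Submodule.span ℂ {Finsupp.single 0 1})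
    simpa using congrArg (· 1) ht

lemma finsuppScalarRight_map_id {W W' : Type*} [AddCommGroup W] [Module ℂ W]
    [AddCommGroup W'] [Module ℂ W'] (g : W →ₗ[ℂ] W') (u : W ⊗[ℂ] (ℤ →₀ ℂ)) (k : ℤ) :
    finsuppScalarRight ℂ ℂ W' ℤ (TensorProduct.map g LinearMap.id u) k =
      g (finsuppScalarRight ℂ ℂ W ℤ u k) := by
  induction u using TensorProduct.induction_on with
  | zero => simp
  | tmul w v => simp
  | add x y hx hy => simp [hx, hy]

lemma finsuppScalarRight_map_dAct {W : Type*} [AddCommGroup W] [Module ℂ W]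
    (α β : ℂ) (n : ℤ) (u : W ⊗[ℂ] (ℤ →₀ ℂ)) (k : ℤ) :
    finsuppScalarRight ℂ ℂ W ℤ (TensorProduct.map LinearMap.id (dAct α β n) u) k =
      (α + ((k - n : ℤ) : ℂ) + n * β) • finsuppScalarRight ℂ ℂ W ℤ u (k - n) := by
  induction u using TensorProduct.induction_on with
  | zero => simp
  | tmul w v => simp [dAct_apply, mul_smul]
  | add x y hx hy => simp [hx, hy]

lemma exists_int_forall_pos_add_mul_eq_zero {W : Type*} [AddCommGroup W] [Module ℂ W]
    {α β c : ℂ} (hc : c ≠ 0) (A : ℤ → Module.End ℂ W) {u : W ⊗[ℂ] (ℤ →₀ ℂ)} (hu : u ≠ 0)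
    (h : ∀ n : ℤ, 0 < n → (TensorProduct.map (A n) LinearMap.id +
      c • TensorProduct.map LinearMap.id (dAct α β n) : Module.End ℂ (W ⊗[ℂ] (ℤ →₀ ℂ))) u = 0) :
    ∃ K : ℤ, ∀ n : ℤ, 0 < n → α + K + n * β = 0 := by
  set f := finsuppScalarRight ℂ ℂ W ℤ u with hf_def
  have hf : f.support.Nonempty := Finsupp.support_nonempty_iff.mpr (by simpa [f] using hu)
  set K := f.support.max' hf
  refine ⟨K, fun n hn => ?_⟩
  have hfK : f K ≠ 0 := Finsupp.mem_support_iff.mp (f.support.max'_mem hf)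
  have hfKn : f (K + n) = 0 :=
    Finsupp.notMem_support_iff.mp fun hmem => by linarith [f.support.le_max' _ hmem]
  have hcoeff := congrArg (finsuppScalarRight ℂ ℂ W ℤ · (K + n)) (h n hn)
  simp only [LinearMap.add_apply, LinearMap.smul_apply, map_add, map_smul, map_zero,
    Finsupp.add_apply, Finsupp.smul_apply, Finsupp.coe_zero, Pi.zero_apply,
    finsuppScalarRight_map_id, finsuppScalarRight_map_dAct, add_sub_cancel_right, ← hf_def,
    hfKn] at hcoeff
  rw [zero_add, smul_smul, smul_eq_zero, mul_eq_zero] at hcoeff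
  exact (hcoeff.resolve_right hfK).resolve_left hc

lemma eq_zero_of_forall_pos_add_mul_eq_zero {α β : ℂ} (hα0 : 0 ≤ α.re) (hα1 : α.re < 1)
    {K : ℤ} (h : ∀ n : ℤ, 0 < n → α + K + n * β = 0) : α = 0 ∧ β = 0 := by
  have h1 := h 1 one_pos
  have h2 := h 2 two_pos
  push_cast at h1 h2
  have hβ : β = 0 := by linear_combination h2 - h1
  have hα : α = -K := by linear_combination h1 - hβ
  have hK : K = 0 := by
    have hre : α.re = -K := by simp [hα]
    have hK0 : K ≤ 0 := by exact_mod_cast (show (K : ℝ) ≤ 0 by linarith)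
    have hK1 : -1 < K := by exact_mod_cast (show (-1 : ℝ) < K by linarith)
    omega
  simp [hα, hK, hβ]

lemma tensAct_single {W : Type*} [AddCommGroup W] [Module ℂ W] (D : HWRep B W)
    (α β : ℂ) (ψ : B →ₐ[ℂ] ℂ) (n : ℤ) (b : B) :
    tensAct B D α β ψ (Finsupp.single n b, 0) =
      TensorProduct.map (D.ρ (Finsupp.single n b, 0)) LinearMap.id +
        ψ b • TensorProduct.map LinearMap.id (dAct α β n) := by
  rw [tensAct, lAction_single, map_smul_right]

lemma tensAct_single_hv_tmul_eq_zero {W : Type*} [AddCommGroup W] [Module ℂ W] (D : HWRep B W)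
    (α β : ℂ) (ψ : B →ₐ[ℂ] ℂ) {n : ℤ} (hn : 0 < n) {b : B} (hb : ψ b = 0) (v : ℤ →₀ ℂ) :
    tensAct B D α β ψ (Finsupp.single n b, 0) (D.hv ⊗ₜ v) = 0 := by
  simp [tensAct_single, D.hw n hn, hb]

theorem iso_implies_psi_eq {W₁ W₂ : Type*} [AddCommGroup W₁] [Module ℂ W₁]
    [AddCommGroup W₂] [Module ℂ W₂]
    (D₁ : HWRep B W₁) (D₂ : HWRep B W₂) (α₁ β₁ α₂ β₂ : ℂ)
    (hα₁0 : 0 ≤ α₁.re) (hα₁1 : α₁.re < 1)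
    (ψ₁ ψ₂ : B →ₐ[ℂ] ℂ)
    (hirr₁ : ActIrreducible (fun x : LVir B => lAction B α₁ β₁ ψ₁ x))
    (T : W₁ ⊗[ℂ] (ℤ →₀ ℂ) ≃ₗ[ℂ] W₂ ⊗[ℂ] (ℤ →₀ ℂ))
    (hT : ∀ (x : LVir B) (v : W₁ ⊗[ℂ] (ℤ →₀ ℂ)),
      T (tensAct B D₁ α₁ β₁ ψ₁ x v) = tensAct B D₂ α₂ β₂ ψ₂ x (T v)) :
    ψ₁ = ψ₂ := by
  by_contra hne
  obtain ⟨b, hb₂, hb₁⟩ := AlgHom.exists_apply_eq_zero_ne_zero_of_ne hne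
  set u := T.symm (D₂.hv ⊗ₜ Finsupp.single 0 1)
  have hu : u ≠ 0 := by
    rw [Ne, LinearEquiv.map_eq_zero_iff, ← finsuppScalarRight_symm_apply_single (R := ℂ) (S := ℂ),
      LinearEquiv.map_eq_zero_iff, Finsupp.single_eq_zero]
    exact D₂.hv_ne
  have hkill : ∀ n : ℤ, 0 < n → tensAct B D₁ α₁ β₁ ψ₁ (Finsupp.single n b, 0) u = 0 :=
    fun n hn => T.map_eq_zero_iff.mp <| by
      rw [hT, LinearEquiv.apply_symm_apply, tensAct_single_hv_tmul_eq_zero B D₂ α₂ β₂ ψ₂ hn hb₂]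
  simp only [tensAct_single] at hkill
  obtain ⟨K, hK⟩ := exists_int_forall_pos_add_mul_eq_zero hb₁ _ hu hkill
  obtain ⟨rfl, rfl⟩ := eq_zero_of_forall_pos_add_mul_eq_zero hα₁0 hα₁1 hK
  exact not_actIrreducible_lAction_zero_zero B ψ₁ hirr₁
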